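/- If a Markov kernel P on a finite metric space has coarse Ricci curvature bounded below by κ₀ with 0 < κ₀ ≤ 1, then P has a unique invariant probability measure π, and for any initial probability measure μ, W₁(μP^k, π) ≤ (1−κ₀)^k · W₁(μ, π), so μP^k converges to π. -/

import Mathlib

open Finset

def IsPMF {X : Type*} [Fintype X] (p : X → ℝ) : Prop :=
  (∀ z, 0 ≤ p z) ∧ ∑ z, p z = 1

def IsCoupling {X : Type*} [Fintype X] (γ : X → X → ℝ) (μ ν : X → ℝ) : Prop :=
  (∀ x y, 0 ≤ γ x y) ∧ (∀ x, ∑ y, γ x y = μ x) ∧ (∀ y, ∑ x, γ x y = ν y)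

noncomputable def W1 {X : Type*} [Fintype X] [MetricSpace X] (μ ν : X → ℝ) : ℝ :=
  sInf {c | ∃ γ, IsCoupling γ μ ν ∧ c = ∑ x, ∑ y, γ x y * dist x y}

def IsKernel {X : Type*} [Fintype X] (P : X → X → ℝ) : Prop := ∀ x, IsPMF (P x)

noncomputable def push {X : Type*} [Fintype X] (μ : X → ℝ) (P : X → X → ℝ) : X → ℝ :=
  fun z => ∑ x, μ x * P x z

set_option linter.unusedSectionVars false

section Aux
variable {X : Type*} [Fintype X] [MetricSpace X]

lemma prod_isCoupling {μ ν : X → ℝ} (hμ : IsPMF μ) (hν : IsPMF ν) :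
    IsCoupling (fun x y => μ x * ν y) μ ν := by
  refine ⟨fun x y => mul_nonneg (hμ.1 x) (hν.1 y), fun x => ?_, fun y => ?_⟩
  · rw [← Finset.mul_sum, hν.2, mul_one]
  · rw [← Finset.sum_mul, hμ.2, one_mul]

lemma costs_nonempty {μ ν : X → ℝ} (hμ : IsPMF μ) (hν : IsPMF ν) :
    {c | ∃ γ, IsCoupling γ μ ν ∧ c = ∑ x, ∑ y, γ x y * dist x y}.Nonempty :=
  ⟨_, _, prod_isCoupling hμ hν, rfl⟩

lemma costs_bddBelow (μ ν : X → ℝ) :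
    BddBelow {c | ∃ γ, IsCoupling γ μ ν ∧ c = ∑ x, ∑ y, γ x y * dist x y} := by
  refine ⟨0, fun c hc => ?_⟩
  obtain ⟨γ, hγ, rfl⟩ := hc
  exact Finset.sum_nonneg fun x _ => Finset.sum_nonneg fun y _ =>
    mul_nonneg (hγ.1 x y) dist_nonneg

lemma W1_nonneg (μ ν : X → ℝ) : 0 ≤ W1 μ ν := by
  apply Real.sInf_nonneg
  rintro c ⟨γ, hγ, rfl⟩
  exact Finset.sum_nonneg fun x _ => Finset.sum_nonneg fun y _ =>
    mul_nonneg (hγ.1 x y) dist_nonneg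

lemma W1_le_cost {μ ν : X → ℝ} {γ : X → X → ℝ} (hγ : IsCoupling γ μ ν) :
    W1 μ ν ≤ ∑ x, ∑ y, γ x y * dist x y :=
  csInf_le (costs_bddBelow μ ν) ⟨γ, hγ, rfl⟩

lemma exists_coupling_lt {μ ν : X → ℝ} (hμ : IsPMF μ) (hν : IsPMF ν) {ε : ℝ} (hε : 0 < ε) :
    ∃ γ, IsCoupling γ μ ν ∧ ∑ x, ∑ y, γ x y * dist x y < W1 μ ν + ε := by
  obtain ⟨c, ⟨γ, hγ, rfl⟩, hlt⟩ := Real.lt_sInf_add_pos (costs_nonempty hμ hν) hε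
  exact ⟨γ, hγ, hlt⟩

lemma push_isPMF {μ : X → ℝ} (hμ : IsPMF μ) {P : X → X → ℝ} (hP : IsKernel P) :
    IsPMF (push μ P) := by
  constructor
  · exact fun z => Finset.sum_nonneg fun x _ => mul_nonneg (hμ.1 x) ((hP x).1 z)
  · show ∑ z, ∑ x, μ x * P x z = 1
    rw [Finset.sum_comm]
    calc ∑ x, ∑ z, μ x * P x z = ∑ x, μ x * ∑ z, P x z := by
          simp [Finset.mul_sum]
      _ = 1 := by simp [fun x => (hP x).2, hμ.2]

lemma coupling_sum_one {μ ν : X → ℝ} (hμ : IsPMF μ) {γ : X → X → ℝ}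
    (hγ : IsCoupling γ μ ν) : ∑ x, ∑ y, γ x y = 1 := by
  simp [hγ.2.1, hμ.2]

end Aux

section Contract
variable {X : Type*} [Fintype X] [MetricSpace X]

lemma sum4_comm {α : Type*} [Fintype α] (f : α → α → α → α → ℝ) :
    ∑ z, ∑ w, ∑ x, ∑ y, f x y z w = ∑ x, ∑ y, ∑ z, ∑ w, f x y z w := by
  rw [show (∑ z, ∑ w, ∑ x, ∑ y, f x y z w) = ∑ z, ∑ x, ∑ w, ∑ y, f x y z w from
    Finset.sum_congr rfl fun z _ => Finset.sum_comm]
  rw [Finset.sum_comm]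
  refine Finset.sum_congr rfl fun x _ => ?_
  rw [show (∑ z, ∑ w, ∑ y, f x y z w) = ∑ z, ∑ y, ∑ w, f x y z w from
    Finset.sum_congr rfl fun z _ => Finset.sum_comm]
  exact Finset.sum_comm

lemma W1_push_contract {P : X → X → ℝ} (hP : IsKernel P) {κ₀ : ℝ} (hκ0 : 0 ≤ κ₀)
    (hκ1 : κ₀ ≤ 1) (hcurv : ∀ x y : X, W1 (P x) (P y) ≤ (1 - κ₀) * dist x y)
    {μ ν : X → ℝ} (hμ : IsPMF μ) (hν : IsPMF ν) :
    W1 (push μ P) (push ν P) ≤ (1 - κ₀) * W1 μ ν := by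
  have hk : 0 ≤ 1 - κ₀ := by linarith
  apply le_of_forall_pos_le_add
  intro ε hε
  have hε2 : 0 < ε / 2 := by linarith
  obtain ⟨γ, hγ, hcost⟩ := exists_coupling_lt hμ hν hε2
  have hch : ∀ x y : X, ∃ g : X → X → ℝ, IsCoupling g (P x) (P y) ∧
      ∑ z, ∑ w, g z w * dist z w < W1 (P x) (P y) + ε / 2 :=
    fun x y => exists_coupling_lt (hP x) (hP y) hε2
  choose g hg hgc using hch
  set Γ : X → X → ℝ := fun z w => ∑ x, ∑ y, γ x y * g x y z w with hΓ
  have hΓc : IsCoupling Γ (push μ P) (push ν P) := by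
    refine ⟨fun z w => Finset.sum_nonneg fun x _ => Finset.sum_nonneg fun y _ =>
      mul_nonneg (hγ.1 x y) ((hg x y).1 z w), fun z => ?_, fun w => ?_⟩
    · rw [Finset.sum_comm]
      calc ∑ x, ∑ w, ∑ y, γ x y * g x y z w
          = ∑ x, ∑ y, γ x y * ∑ w, g x y z w := by
            rw [Finset.sum_congr rfl]; intro x _
            rw [Finset.sum_comm]
            exact Finset.sum_congr rfl fun y _ => (Finset.mul_sum _ _ _).symm
        _ = ∑ x, (∑ y, γ x y) * P x z := by
            refine Finset.sum_congr rfl fun x _ => ?_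
            rw [Finset.sum_mul]
            exact Finset.sum_congr rfl fun y _ => by rw [(hg x y).2.1 z]
        _ = push μ P z := Finset.sum_congr rfl fun x _ => by rw [hγ.2.1 x]
    · rw [Finset.sum_comm]
      calc ∑ x, ∑ z, ∑ y, γ x y * g x y z w
          = ∑ x, ∑ y, γ x y * ∑ z, g x y z w := by
            rw [Finset.sum_congr rfl]; intro x _
            rw [Finset.sum_comm]
            exact Finset.sum_congr rfl fun y _ => (Finset.mul_sum _ _ _).symm
        _ = ∑ y, (∑ x, γ x y) * P y w := by
            rw [Finset.sum_comm]
            refine Finset.sum_congr rfl fun y _ => ?_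
            rw [Finset.sum_mul]
            exact Finset.sum_congr rfl fun x _ => by rw [(hg x y).2.2 w]
        _ = push ν P w := Finset.sum_congr rfl fun y _ => by rw [hγ.2.2 y]
  have hsum1 : ∑ x, ∑ y, γ x y = 1 := coupling_sum_one hμ hγ
  have h1 : ∑ z, ∑ w, Γ z w * dist z w
      = ∑ x, ∑ y, γ x y * ∑ z, ∑ w, g x y z w * dist z w := by
    calc ∑ z, ∑ w, Γ z w * dist z w
        = ∑ z, ∑ w, ∑ x, ∑ y, γ x y * (g x y z w * dist z w) := by
          refine Finset.sum_congr rfl fun z _ => Finset.sum_congr rfl fun w _ => ?_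
          simp only [hΓ, Finset.sum_mul]
          exact Finset.sum_congr rfl fun x _ => Finset.sum_congr rfl fun y _ =>
            mul_assoc _ _ _
      _ = ∑ x, ∑ y, ∑ z, ∑ w, γ x y * (g x y z w * dist z w) := sum4_comm _
      _ = ∑ x, ∑ y, γ x y * ∑ z, ∑ w, g x y z w * dist z w := by
          refine Finset.sum_congr rfl fun x _ => Finset.sum_congr rfl fun y _ => ?_
          simp only [Finset.mul_sum]
  have hcostΓ : ∑ z, ∑ w, Γ z w * dist z w
      ≤ (1 - κ₀) * (∑ x, ∑ y, γ x y * dist x y) + ε / 2 := by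
    rw [h1]
    have h2 : ∀ x y : X, γ x y * ∑ z, ∑ w, g x y z w * dist z w
        ≤ γ x y * ((1 - κ₀) * dist x y + ε / 2) := fun x y =>
      mul_le_mul_of_nonneg_left (le_of_lt (lt_of_lt_of_le (hgc x y)
        (by linarith [hcurv x y]))) (hγ.1 x y)
    calc ∑ x, ∑ y, γ x y * ∑ z, ∑ w, g x y z w * dist z w
        ≤ ∑ x, ∑ y, γ x y * ((1 - κ₀) * dist x y + ε / 2) :=
          Finset.sum_le_sum fun x _ => Finset.sum_le_sum fun y _ => h2 x y
      _ = (1 - κ₀) * (∑ x, ∑ y, γ x y * dist x y) + ε / 2 * (∑ x, ∑ y, γ x y) := by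
          simp only [Finset.mul_sum]
          rw [← Finset.sum_add_distrib]
          refine Finset.sum_congr rfl fun x _ => ?_
          rw [← Finset.sum_add_distrib]
          exact Finset.sum_congr rfl fun y _ => by ring
      _ = (1 - κ₀) * (∑ x, ∑ y, γ x y * dist x y) + ε / 2 := by rw [hsum1, mul_one]
  calc W1 (push μ P) (push ν P) ≤ ∑ z, ∑ w, Γ z w * dist z w := W1_le_cost hΓc
    _ ≤ (1 - κ₀) * (∑ x, ∑ y, γ x y * dist x y) + ε / 2 := hcostΓ
    _ ≤ (1 - κ₀) * (W1 μ ν + ε / 2) + ε / 2 :=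
        add_le_add_left (mul_le_mul_of_nonneg_left (le_of_lt hcost) hk) _
    _ ≤ (1 - κ₀) * W1 μ ν + ε := by nlinarith

end Contract
section Sep
attribute [local instance] Classical.propDecidable
variable {X : Type*} [Fintype X] [MetricSpace X]

lemma coupling_pointwise {μ ν : X → ℝ} {γ : X → X → ℝ} (hγ : IsCoupling γ μ ν)
    {d₀ : ℝ} (hd : ∀ a b : X, a ≠ b → d₀ ≤ dist a b) (hd0 : 0 ≤ d₀) (z : X) :
    d₀ * (μ z - ν z) ≤ ∑ x, ∑ y, γ x y * dist x y := by
  have key : μ z - ν z ≤ ∑ y ∈ Finset.univ.erase z, γ z y := by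
    have h1 : μ z = γ z z + ∑ y ∈ Finset.univ.erase z, γ z y := by
      rw [← hγ.2.1 z, ← Finset.add_sum_erase _ _ (Finset.mem_univ z)]
    have h2 : γ z z ≤ ν z := by
      rw [← hγ.2.2 z, ← Finset.add_sum_erase _ _ (Finset.mem_univ z)]
      have : 0 ≤ ∑ x ∈ Finset.univ.erase z, γ x z :=
        Finset.sum_nonneg fun x _ => hγ.1 x z
      linarith
    linarith
  have hle : d₀ * (μ z - ν z) ≤ d₀ * ∑ y ∈ Finset.univ.erase z, γ z y :=
    mul_le_mul_of_nonneg_left key hd0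
  refine hle.trans ?_
  calc d₀ * ∑ y ∈ Finset.univ.erase z, γ z y
      = ∑ y ∈ Finset.univ.erase z, d₀ * γ z y := by rw [Finset.mul_sum]
    _ ≤ ∑ y ∈ Finset.univ.erase z, γ z y * dist z y := by
        refine Finset.sum_le_sum fun y hy => ?_
        have hne : z ≠ y := fun h => (Finset.mem_erase.mp hy).1 h.symm
        calc d₀ * γ z y ≤ dist z y * γ z y :=
              mul_le_mul_of_nonneg_right (hd z y hne) (hγ.1 z y)
          _ = γ z y * dist z y := mul_comm _ _
    _ ≤ ∑ y, γ z y * dist z y :=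
        Finset.sum_le_sum_of_subset_of_nonneg (Finset.subset_univ _)
          (fun y _ _ => mul_nonneg (hγ.1 z y) dist_nonneg)
    _ ≤ ∑ x, ∑ y, γ x y * dist x y := by
        refine Finset.single_le_sum (f := fun x => ∑ y, γ x y * dist x y)
          (fun x _ => Finset.sum_nonneg fun y _ => mul_nonneg (hγ.1 x y) dist_nonneg)
          (Finset.mem_univ z)

lemma coupling_swap {μ ν : X → ℝ} {γ : X → X → ℝ} (hγ : IsCoupling γ μ ν) :
    IsCoupling (fun x y => γ y x) ν μ :=
  ⟨fun x y => hγ.1 y x, fun x => hγ.2.2 x, fun y => hγ.2.1 y⟩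

lemma exists_sep [Nonempty X] : ∃ C : ℝ, 0 < C ∧ ∀ μ ν : X → ℝ, IsPMF μ → IsPMF ν →
    ∀ z : X, |μ z - ν z| ≤ C * W1 μ ν := by
  by_cases hcard : ∃ a b : X, a ≠ b
  · obtain ⟨a, b, hab⟩ := hcard
    set s := (Finset.univ.offDiag (α := X)).image (fun p : X × X => dist p.1 p.2) with hs
    have hsne : s.Nonempty := ⟨dist a b, Finset.mem_image.mpr
      ⟨(a, b), Finset.mem_offDiag.mpr ⟨Finset.mem_univ a, Finset.mem_univ b, hab⟩, rfl⟩⟩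
    set d₀ := s.min' hsne with hd₀
    have hd0pos : 0 < d₀ := by
      obtain ⟨p, hp, hpd⟩ := Finset.mem_image.mp (s.min'_mem hsne)
      have hpos : 0 < dist p.1 p.2 := dist_pos.mpr (Finset.mem_offDiag.mp hp).2.2
      exact lt_of_lt_of_eq hpos (hpd.trans hd₀.symm)
    have hdle : ∀ u v : X, u ≠ v → d₀ ≤ dist u v := fun u v huv =>
      Finset.min'_le _ _ (Finset.mem_image.mpr
        ⟨(u, v), Finset.mem_offDiag.mpr ⟨Finset.mem_univ u, Finset.mem_univ v, huv⟩, rfl⟩)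
    refine ⟨d₀⁻¹, inv_pos.mpr hd0pos, fun μ ν hμ hν z => ?_⟩
    have hW : d₀ * |μ z - ν z| ≤ W1 μ ν := by
      apply le_csInf (costs_nonempty hμ hν)
      rintro c ⟨γ, hγ, rfl⟩
      rcases abs_cases (μ z - ν z) with ⟨h, _⟩ | ⟨h, _⟩
      · rw [h]; exact coupling_pointwise hγ hdle hd0pos.le z
      · rw [h]
        have := coupling_pointwise (coupling_swap hγ) hdle hd0pos.le z
        calc d₀ * -(μ z - ν z) = d₀ * (ν z - μ z) := by ring_nf
          _ ≤ ∑ x, ∑ y, γ y x * dist x y := this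
          _ = ∑ x, ∑ y, γ x y * dist x y := by
              rw [Finset.sum_comm]
              exact Finset.sum_congr rfl fun x _ => Finset.sum_congr rfl fun y _ =>
                by rw [dist_comm]
    calc |μ z - ν z| = d₀⁻¹ * (d₀ * |μ z - ν z|) := by
          field_simp
      _ ≤ d₀⁻¹ * W1 μ ν :=
          mul_le_mul_of_nonneg_left hW (inv_pos.mpr hd0pos).le
  · push_neg at hcard
    refine ⟨1, one_pos, fun μ ν hμ hν z => ?_⟩
    have hμz : μ z = 1 := by
      rw [← hμ.2]
      rw [Finset.sum_eq_single_of_mem z (Finset.mem_univ z)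
        (fun b _ hb => absurd (hcard b z) hb.elim)]
    have hνz : ν z = 1 := by
      rw [← hν.2]
      rw [Finset.sum_eq_single_of_mem z (Finset.mem_univ z)
        (fun b _ hb => absurd (hcard b z) hb.elim)]
    rw [hμz, hνz, sub_self, abs_zero, one_mul]
    exact W1_nonneg μ ν

lemma W1_eq_zero_iff_aux [Nonempty X] {μ ν : X → ℝ} (hμ : IsPMF μ) (hν : IsPMF ν)
    (h : W1 μ ν ≤ 0) : μ = ν := by
  obtain ⟨C, hC, hsep⟩ := exists_sep (X := X)
  funext z
  have h1 := hsep μ ν hμ hν z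
  have h2 : C * W1 μ ν ≤ 0 := mul_nonpos_of_nonneg_of_nonpos hC.le h
  have := abs_nonneg (μ z - ν z)
  have : |μ z - ν z| = 0 := le_antisymm (h1.trans h2) this
  linarith [abs_eq_zero.mp this, sub_eq_zero.mp (abs_eq_zero.mp this)]

end Sep

theorem stmt2 {X : Type*} [Fintype X] [MetricSpace X] [Nonempty X]
    (P : X → X → ℝ) (hP : IsKernel P) (κ₀ : ℝ) (hκ0 : 0 < κ₀) (hκ1 : κ₀ ≤ 1)
    (hcurv : ∀ x y : X, W1 (P x) (P y) ≤ (1 - κ₀) * dist x y) :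
    ∃ π : X → ℝ, IsPMF π ∧ push π P = π ∧
      (∀ π' : X → ℝ, IsPMF π' → push π' P = π' → π' = π) ∧
      (∀ μ : X → ℝ, IsPMF μ → ∀ k : ℕ,
        W1 ((fun m => push m P)^[k] μ) π ≤ (1 - κ₀) ^ k * W1 μ π) ∧
      (∀ μ : X → ℝ, IsPMF μ →
        Filter.Tendsto (fun k : ℕ => W1 ((fun m => push m P)^[k] μ) π)
          Filter.atTop (nhds 0)) := by
  classical
  obtain ⟨C, hC, hsep⟩ := exists_sep (X := X)
  have hk0 : (0:ℝ) ≤ 1 - κ₀ := by linarith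
  have hk1 : 1 - κ₀ < 1 := by linarith
  set F : (X → ℝ) → (X → ℝ) := fun m => push m P with hF
  have hFpmf : ∀ {m : X → ℝ}, IsPMF m → IsPMF (F m) := fun hm => push_isPMF hm hP
  have hFiter : ∀ (μ : X → ℝ), IsPMF μ → ∀ k, IsPMF (F^[k] μ) := by
    intro μ hμ k
    induction k with
    | zero => exact hμ
    | succ n ih =>
      rw [Function.iterate_succ_apply']
      exact hFpmf ih
  have hcontract : ∀ {μ ν : X → ℝ}, IsPMF μ → IsPMF ν →
      W1 (F μ) (F ν) ≤ (1 - κ₀) * W1 μ ν :=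
    fun hμ hν => W1_push_contract hP hκ0.le hκ1 hcurv hμ hν
  obtain ⟨x₀⟩ := ‹Nonempty X›
  set μ₀ : X → ℝ := fun z => if z = x₀ then 1 else 0 with hμ₀def
  have hμ₀ : IsPMF μ₀ := by
    constructor
    · intro z; by_cases h : z = x₀ <;> simp [hμ₀def, h]
    · simp [hμ₀def]
  set seq : ℕ → X → ℝ := fun k => F^[k] μ₀ with hseq
  have hseqPMF : ∀ k, IsPMF (seq k) := hFiter μ₀ hμ₀
  have hseqsucc : ∀ k, seq (k+1) = F (seq k) := fun k =>
    Function.iterate_succ_apply' F k μ₀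
  have hstep : ∀ k, W1 (seq (k+1)) (seq k) ≤ (1-κ₀)^k * W1 (seq 1) (seq 0) := by
    intro k
    induction k with
    | zero => simp
    | succ n ih =>
      have h1 : W1 (seq (n+2)) (seq (n+1)) ≤ (1-κ₀) * W1 (seq (n+1)) (seq n) := by
        have := hcontract (hseqPMF (n+1)) (hseqPMF n)
        rw [← hseqsucc (n+1), ← hseqsucc n] at this
        exact this
      calc W1 (seq (n+2)) (seq (n+1)) ≤ (1-κ₀) * W1 (seq (n+1)) (seq n) := h1
        _ ≤ (1-κ₀) * ((1-κ₀)^n * W1 (seq 1) (seq 0)) :=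
            mul_le_mul_of_nonneg_left ih hk0
        _ = (1-κ₀)^(n+1) * W1 (seq 1) (seq 0) := by ring
  have hW10 : 0 ≤ W1 (seq 1) (seq 0) := W1_nonneg _ _
  have hcauchy : ∀ z : X, CauchySeq (fun k => seq k z) := by
    intro z
    apply cauchySeq_of_le_geometric (1-κ₀) (C * W1 (seq 1) (seq 0)) hk1
    intro n
    rw [Real.dist_eq, abs_sub_comm]
    calc |seq (n+1) z - seq n z| ≤ C * W1 (seq (n+1)) (seq n) :=
          hsep _ _ (hseqPMF (n+1)) (hseqPMF n) z
      _ ≤ C * ((1-κ₀)^n * W1 (seq 1) (seq 0)) :=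
          mul_le_mul_of_nonneg_left (hstep n) hC.le
      _ = C * W1 (seq 1) (seq 0) * (1-κ₀)^n := by ring
  have hconv : ∀ z : X, ∃ l : ℝ, Filter.Tendsto (fun k => seq k z) Filter.atTop (nhds l) :=
    fun z => cauchySeq_tendsto_of_complete (hcauchy z)
  choose π hπ using hconv
  have hπPMF : IsPMF π := by
    constructor
    · intro z
      exact ge_of_tendsto (hπ z) (Filter.Eventually.of_forall fun k => (hseqPMF k).1 z)
    · have h1 : Filter.Tendsto (fun k => ∑ z, seq k z) Filter.atTop (nhds (∑ z, π z)) :=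
        tendsto_finset_sum _ fun z _ => hπ z
      have h2 : (fun k => ∑ z, seq k z) = fun _ => (1:ℝ) :=
        funext fun k => (hseqPMF k).2
      rw [h2] at h1
      exact tendsto_nhds_unique h1 tendsto_const_nhds
  have hπinv : push π P = π := by
    funext z
    have h1 : Filter.Tendsto (fun k => push (seq k) P z) Filter.atTop (nhds (push π P z)) := by
      apply tendsto_finset_sum
      intro x _
      exact (hπ x).mul_const (P x z)
    have h2 : (fun k => push (seq k) P z) = fun k => seq (k+1) z := by
      funext k
      rw [hseqsucc k]
    rw [h2] at h1
    have h3 : Filter.Tendsto (fun k => seq (k+1) z) Filter.atTop (nhds (π z)) :=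
      (hπ z).comp (Filter.tendsto_add_atTop_nat 1)
    exact tendsto_nhds_unique h1 h3
  have hW1zero : ∀ {ν : X → ℝ}, IsPMF ν → W1 ν π ≤ 0 → ν = π :=
    fun hν h => W1_eq_zero_iff_aux hν hπPMF h
  have hrate : ∀ μ : X → ℝ, IsPMF μ → ∀ k : ℕ,
      W1 (F^[k] μ) π ≤ (1 - κ₀) ^ k * W1 μ π := by
    intro μ hμ k
    induction k with
    | zero => simp
    | succ n ih =>
      have h1 : W1 (F^[n+1] μ) π ≤ (1-κ₀) * W1 (F^[n] μ) π := by
        rw [Function.iterate_succ_apply']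
        calc W1 (F (F^[n] μ)) π = W1 (F (F^[n] μ)) (F π) := by rw [show F π = π from hπinv]
          _ ≤ (1-κ₀) * W1 (F^[n] μ) π := hcontract (hFiter μ hμ n) hπPMF
      calc W1 (F^[n+1] μ) π ≤ (1-κ₀) * W1 (F^[n] μ) π := h1
        _ ≤ (1-κ₀) * ((1-κ₀)^n * W1 μ π) := mul_le_mul_of_nonneg_left ih hk0
        _ = (1-κ₀)^(n+1) * W1 μ π := by ring
  refine ⟨π, hπPMF, hπinv, ?_, hrate, ?_⟩
  · intro π' hπ' hπ'inv
    have h1 : W1 π' π ≤ (1-κ₀) * W1 π' π := by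
      calc W1 π' π = W1 (F π') (F π) := by rw [show F π' = π' from hπ'inv, show F π = π from hπinv]
        _ ≤ (1-κ₀) * W1 π' π := hcontract hπ' hπPMF
    have h2 : 0 ≤ W1 π' π := W1_nonneg _ _
    exact hW1zero hπ' (by nlinarith)
  · intro μ hμ
    have hub : ∀ k : ℕ, W1 (F^[k] μ) π ≤ (1-κ₀)^k * W1 μ π := hrate μ hμ
    have hlb : ∀ k : ℕ, 0 ≤ W1 (F^[k] μ) π := fun k => W1_nonneg _ _
    have hlim : Filter.Tendsto (fun k : ℕ => (1-κ₀)^k * W1 μ π) Filter.atTop (nhds 0) := by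
      have := (tendsto_pow_atTop_nhds_zero_of_lt_one hk0 hk1).mul_const (W1 μ π)
      simpa using this
    exact squeeze_zero hlb hub hlim
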